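/- Let σ_i, σ_j > 0, and let p, p′ > 0 and d ≥ 0 satisfy p + p′ + d = 1, d = 2·√(p·p′), and (p + d/2)·σ_j = (p′ + d/2)·σ_i. Then p = (σ_i/(σ_i + σ_j))² and σ_i/σ_j = √(p/p′). (In the Alternative model with ν = 2, the win probability equals the Bradley-Terry probability of two consecutive wins, and the strength ratio is the square root of the win-probability ratio.) -/

import Mathlib

/-!
With `a = √p` and `b = √p'` the draw condition gives `p + p' + d = (a + b)²`, so `a + b = 1`;
then `p + d/2 = a (a + b) = a` and `p' + d/2 = b`. The strength condition therefore reads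
`a σj = b σi`, whence `a = σi / (σi + σj)` and `σi / σj = a / b`.
-/

open Real

lemma sqrt_add_sqrt_eq_one {p q : ℝ} (hp : 0 ≤ p) (hq : 0 ≤ q)
    (h : p + q + 2 * √(p * q) = 1) : √p + √q = 1 := by
  have hsq : (√p + √q) ^ 2 = 1 := by
    rw [← h, add_sq, sq_sqrt hp, sq_sqrt hq, sqrt_mul hp]
    ring
  nlinarith [sqrt_nonneg p, sqrt_nonneg q]

lemma add_sqrt_mul_eq_sqrt {p q : ℝ} (hp : 0 ≤ p) (h : √p + √q = 1) :
    p + √(p * q) = √p := by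
  calc p + √(p * q) = √p * (√p + √q) := by rw [sqrt_mul hp, mul_add, mul_self_sqrt hp]
    _ = √p := by rw [h, mul_one]

lemma eq_div_add_of_mul_eq_mul {a b x y : ℝ} (hab : a + b = 1) (h : a * y = b * x)
    (hxy : x + y ≠ 0) : a = x / (x + y) := by
  rw [eq_div_iff hxy]
  linear_combination x * hab + h

theorem alternative_nu_two (σi σj : ℝ) (hσi : 0 < σi) (hσj : 0 < σj)
    (p p' d : ℝ) (hp : 0 < p) (hp' : 0 < p')
    (hsum : p + p' + d = 1) (hdraw : d = 2 * Real.sqrt (p * p'))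
    (hratio : (p + d / 2) * σj = (p' + d / 2) * σi) :
    p = (σi / (σi + σj)) ^ 2 ∧ σi / σj = Real.sqrt (p / p') := by
  subst hdraw
  have hone : √p + √p' = 1 := sqrt_add_sqrt_eq_one hp.le hp'.le hsum
  have hwin : p + 2 * √(p * p') / 2 = √p := by
    rw [mul_div_cancel_left₀ _ two_ne_zero, add_sqrt_mul_eq_sqrt hp.le hone]
  have hloss : p' + 2 * √(p * p') / 2 = √p' := by
    rw [mul_div_cancel_left₀ _ two_ne_zero, mul_comm,
      add_sqrt_mul_eq_sqrt hp'.le (by rwa [add_comm])]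
  rw [hwin, hloss] at hratio
  constructor
  · rw [← sq_sqrt hp.le, eq_div_add_of_mul_eq_mul hone hratio (by positivity)]
  · rw [sqrt_div' _ hp'.le, div_eq_div_iff hσj.ne' (sqrt_pos.2 hp').ne']
    linarith
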